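/- arXiv:1707.07758 — 5 statements merged into one kernel-verified Lean document; each statement's English description precedes it below -/
import Mathlib

section
/- Fix a reduced word a_1,…,a_N of w₀ ∈ S_n, the associated ordered pairs τ_i = (p_i,q_i), an integer 1 ≤ m ≤ N, and let σ = s_{a_{m−1}}∘⋯∘s_{a_1} ∈ S_n (rightmost factor acting first). Then for every 0 ≤ j ≤ m−1, the linear span V_j ⊆ gl(n,ℂ) of the matrix units E_{σ(q_i) σ(p_i)} for 1 ≤ i ≤ j together with all matrix units E_{ab} with a < b and σ^{−1}(a) < σ^{−1}(b) is closed under the commutator bracket [X,Y] = XY − YX, i.e., V_j is a Lie subalgebra of the strictly upper triangular matrices. -/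
open Matrix

noncomputable section

/-- The adjacent transposition `s i` exchanging `i` and `i + 1` (acting on `ℕ`,
1-indexed positions). -/
def sperm (i : ℕ) : Equiv.Perm ℕ := Equiv.swap i (i + 1)

/-- `prefixProd a j = s_{a 1} * s_{a 2} * ... * s_{a j}` (rightmost factor acting first). -/
def prefixProd (a : ℕ → ℕ) : ℕ → Equiv.Perm ℕ
  | 0 => 1
  | j + 1 => prefixProd a j * sperm (a (j + 1))

/-- `wordProd a j = s_{a j} ∘ s_{a (j-1)} ∘ ... ∘ s_{a 1}` (rightmost factor acting first). -/
def wordProd (a : ℕ → ℕ) : ℕ → Equiv.Perm ℕ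
  | 0 => 1
  | j + 1 => sperm (a (j + 1)) * wordProd a j

/-- The positive root `τ_j = (p_j, q_j)`, `p_j < q_j`: the pair obtained by applying
`s_{a 1} ∘ ... ∘ s_{a (j-1)}` to the pair `(a j, a j + 1)`. -/
def tauRoot (a : ℕ → ℕ) (j : ℕ) : ℕ × ℕ :=
  (min (prefixProd a (j - 1) (a j)) (prefixProd a (j - 1) (a j + 1)),
   max (prefixProd a (j - 1) (a j)) (prefixProd a (j - 1) (a j + 1)))

/-- The matrix unit `E_{a b}` (1-indexed) in `gl(n, ℂ)`. -/
def Emat (n a b : ℕ) : Matrix (Fin n) (Fin n) ℂ :=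
  Matrix.of fun i j => if (i : ℕ) + 1 = a ∧ (j : ℕ) + 1 = b then 1 else 0

/-- `i_τ(ζ) = I + ζ⁻ E_{q p} + ζ⁺ E_{p q} + ζ⁻ ζ⁺ E_{q q}` for `τ = (p, q)`. -/
def iMat (n : ℕ) (t : ℕ × ℕ) (z : ℂ × ℂ) : Matrix (Fin n) (Fin n) ℂ :=
  1 + z.1 • Emat n t.2 t.1 + z.2 • Emat n t.1 t.2 + (z.1 * z.2) • Emat n t.2 t.2

/-- The partial forward map: `fwd n a ζ j = i_{τ_j}(ζ_j) ⋯ i_{τ_1}(ζ_1)`. -/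
def fwd (n : ℕ) (a : ℕ → ℕ) (ζ : ℕ → ℂ × ℂ) : ℕ → Matrix (Fin n) (Fin n) ℂ
  | 0 => 1
  | j + 1 => iMat n (tauRoot a (j + 1)) (ζ (j + 1)) * fwd n a ζ j

/-- `a 1, ..., a (n(n-1)/2)` is a reduced word for the longest element `w₀ : i ↦ n + 1 - i`
of `S_n`: all letters lie in `{1, ..., n-1}` and `s_{a_N} ∘ ⋯ ∘ s_{a_1} = w₀`. -/
def IsReducedWord (n : ℕ) (a : ℕ → ℕ) : Prop :=
  (∀ j, 1 ≤ j → j ≤ n * (n - 1) / 2 → 1 ≤ a j ∧ a j ≤ n - 1) ∧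
  (∀ i, 1 ≤ i → i ≤ n → wordProd a (n * (n - 1) / 2) i = n + 1 - i)

/-- lower unitriangular -/
def IsLowerUni {n : ℕ} (M : Matrix (Fin n) (Fin n) ℂ) : Prop :=
  (∀ i, M i i = 1) ∧ ∀ i j : Fin n, i < j → M i j = 0

/-- upper unitriangular -/
def IsUpperUni {n : ℕ} (M : Matrix (Fin n) (Fin n) ℂ) : Prop :=
  (∀ i, M i i = 1) ∧ ∀ i j : Fin n, j < i → M i j = 0

/-- Ordered exponential product `(I + c_j E_{q_j p_j}) ⋯ (I + c_1 E_{q_1 p_1})`. -/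
def lowerProd (n : ℕ) (a : ℕ → ℕ) (c : ℕ → ℂ) : ℕ → Matrix (Fin n) (Fin n) ℂ
  | 0 => 1
  | j + 1 =>
    (1 + c (j + 1) • Emat n (tauRoot a (j + 1)).2 (tauRoot a (j + 1)).1) * lowerProd n a c j

/-- Ordered exponential product `(I + c_j E_{p_j q_j}) ⋯ (I + c_1 E_{p_1 q_1})`. -/
def upperProd (n : ℕ) (a : ℕ → ℕ) (c : ℕ → ℂ) : ℕ → Matrix (Fin n) (Fin n) ℂ
  | 0 => 1
  | j + 1 =>
    (1 + c (j + 1) • Emat n (tauRoot a (j + 1)).1 (tauRoot a (j + 1)).2) * upperProd n a c j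

/-- Evaluation of the `2N` variables `(k, false) ↦ ζ_k⁻`, `(k, true) ↦ ζ_k⁺`. -/
def evalZeta (ζ : ℕ → ℂ × ℂ) : ℕ × Bool → ℂ := fun v => if v.2 then (ζ v.1).2 else (ζ v.1).1

section AuxStmt3

variable {n : ℕ} {a : ℕ → ℕ}

lemma sperm_fix {i x : ℕ} (h1 : x ≠ i) (h2 : x ≠ i + 1) : sperm i x = x :=
  Equiv.swap_apply_of_ne_of_ne h1 h2

lemma wordProd_succ (a : ℕ → ℕ) (k x : ℕ) :
    wordProd a (k + 1) x = sperm (a (k + 1)) (wordProd a k x) := rfl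

lemma wordProd_fix (ha : IsReducedWord n a) :
    ∀ k, k ≤ n * (n - 1) / 2 → ∀ x, (x = 0 ∨ n < x) → wordProd a k x = x := by
  intro k
  induction k with
  | zero => intro _ x _; rfl
  | succ k ih =>
    intro hk x hx
    have hl := ha.1 (k + 1) (by omega) hk
    rw [wordProd_succ, ih (by omega) x hx, sperm_fix (by omega) (by omega)]

lemma wordProd_mem (ha : IsReducedWord n a) {k : ℕ} (hk : k ≤ n * (n - 1) / 2)
    {x : ℕ} (hx1 : 1 ≤ x) (hx2 : x ≤ n) :
    1 ≤ wordProd a k x ∧ wordProd a k x ≤ n := by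
  by_contra h
  have hfix : wordProd a k (wordProd a k x) = wordProd a k x :=
    wordProd_fix ha k hk _ (by omega)
  have := (wordProd a k).injective hfix
  omega

lemma wordProd_symm_mem (ha : IsReducedWord n a) {k : ℕ} (hk : k ≤ n * (n - 1) / 2)
    {x : ℕ} (hx1 : 1 ≤ x) (hx2 : x ≤ n) :
    1 ≤ (wordProd a k).symm x ∧ (wordProd a k).symm x ≤ n := by
  by_contra h
  have hfix : wordProd a k ((wordProd a k).symm x) = (wordProd a k).symm x :=
    wordProd_fix ha k hk _ (by omega)
  rw [Equiv.apply_symm_apply] at hfix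
  omega

lemma prefixProd_eq (a : ℕ → ℕ) : ∀ k, prefixProd a k = (wordProd a k)⁻¹
  | 0 => rfl
  | k + 1 => by
    show prefixProd a k * sperm (a (k + 1)) = (sperm (a (k + 1)) * wordProd a k)⁻¹
    rw [_root_.mul_inv_rev, prefixProd_eq a k]
    congr 1

lemma prefixProd_apply (a : ℕ → ℕ) (k x : ℕ) :
    prefixProd a k x = (wordProd a k).symm x := by
  rw [prefixProd_eq]; rfl

def invSet (n : ℕ) (a : ℕ → ℕ) (k : ℕ) : Finset (ℕ × ℕ) :=
  (Finset.Icc 1 n ×ˢ Finset.Icc 1 n).filter fun pq =>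
    pq.1 < pq.2 ∧ wordProd a k pq.2 < wordProd a k pq.1

lemma mem_invSet {k p q : ℕ} : (p, q) ∈ invSet n a k ↔
    1 ≤ p ∧ p ≤ n ∧ 1 ≤ q ∧ q ≤ n ∧ p < q ∧ wordProd a k q < wordProd a k p := by
  simp [invSet, Finset.mem_filter, Finset.mem_product, and_assoc]

lemma swap_lt {i X Y : ℕ} (h : ¬(X = i ∧ Y = i + 1)) (h' : ¬(X = i + 1 ∧ Y = i)) :
    (sperm i X < sperm i Y ↔ X < Y) := by
  unfold sperm
  by_cases hX : X = i <;> by_cases hX' : X = i + 1 <;>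
    by_cases hY : Y = i <;> by_cases hY' : Y = i + 1 <;>
    simp_all [Equiv.swap_apply_left, Equiv.swap_apply_right,
      Equiv.swap_apply_of_ne_of_ne] <;> omega

end AuxStmt3

section AuxStmt3b

variable {n : ℕ} {a : ℕ → ℕ}

lemma invSet_step (ha : IsReducedWord n a) {k : ℕ} (hk : k + 1 ≤ n * (n - 1) / 2) :
    (∃ u v, u < v ∧ tauRoot a (k + 1) = (u, v) ∧ (u, v) ∉ invSet n a k ∧
        invSet n a (k + 1) = insert (u, v) (invSet n a k)) ∨
    (∃ u v, v < u ∧ (v, u) ∈ invSet n a k ∧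
        invSet n a (k + 1) = (invSet n a k).erase (v, u)) := by
  have hil := ha.1 (k + 1) (by omega) hk
  set i := a (k + 1) with hidef
  set w := wordProd a k with hw
  set u := w.symm i with hu
  set v := w.symm (i + 1) with hv
  have hwu : w u = i := Equiv.apply_symm_apply _ _
  have hwv : w v = i + 1 := Equiv.apply_symm_apply _ _
  have huv : u ≠ v := fun h => by rw [h, hwv] at hwu; omega
  have hum : 1 ≤ u ∧ u ≤ n := wordProd_symm_mem ha (by omega) (by omega) (by omega)
  have hvm : 1 ≤ v ∧ v ≤ n := wordProd_symm_mem ha (by omega) (by omega) (by omega)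
  have hsucc : ∀ x, wordProd a (k + 1) x = sperm i (w x) := fun x => rfl
  have heqil : ∀ p : ℕ, w p = i ↔ p = u := by
    intro p
    constructor
    · intro h; rw [hu, ← h, Equiv.symm_apply_apply]
    · intro h; rw [h, hwu]
  have heqil' : ∀ p : ℕ, w p = i + 1 ↔ p = v := by
    intro p
    constructor
    · intro h; rw [hv, ← h, Equiv.symm_apply_apply]
    · intro h; rw [h, hwv]
  have htau : tauRoot a (k + 1) = (min u v, max u v) := by
    simp only [tauRoot, Nat.add_sub_cancel, prefixProd_apply, ← hw, ← hidef, ← hu, ← hv]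
  by_cases hlt : u < v
  · left
    refine ⟨u, v, hlt, ?_, ?_, ?_⟩
    · rw [htau, min_eq_left hlt.le, max_eq_right hlt.le]
    · intro hmem
      rw [mem_invSet] at hmem
      rw [hwu, hwv] at hmem
      omega
    · ext ⟨p, q⟩
      rw [Finset.mem_insert, mem_invSet, mem_invSet, hsucc, hsucc, Prod.mk.injEq]
      constructor
      · rintro ⟨hp1, hp2, hq1, hq2, hpq, hs⟩
        by_cases h1 : w p = i ∧ w q = i + 1
        · exact Or.inl ⟨(heqil p).mp h1.1, (heqil' q).mp h1.2⟩
        · by_cases h2 : w p = i + 1 ∧ w q = i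
          · exfalso
            have := (heqil' p).mp h2.1
            have := (heqil q).mp h2.2
            omega
          · refine Or.inr ⟨hp1, hp2, hq1, hq2, hpq, ?_⟩
            exact (swap_lt (fun ⟨h3, h4⟩ => h2 ⟨h4, h3⟩) (fun ⟨h3, h4⟩ => h1 ⟨h4, h3⟩)).mp hs
      · rintro (⟨rfl, rfl⟩ | ⟨hp1, hp2, hq1, hq2, hpq, hs⟩)
        · refine ⟨hum.1, hum.2, hvm.1, hvm.2, hlt, ?_⟩
          rw [hwu, hwv]
          simp [sperm, Equiv.swap_apply_left, Equiv.swap_apply_right]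
        · refine ⟨hp1, hp2, hq1, hq2, hpq, ?_⟩
          refine (swap_lt ?_ ?_).mpr hs
          · rintro ⟨h3, h4⟩
            have := (heqil q).mp h3
            have := (heqil' p).mp h4
            omega
          · rintro ⟨h3, h4⟩
            rw [h3, h4] at hs
            omega
  · right
    have hlt' : v < u := by omega
    refine ⟨u, v, hlt', ?_, ?_⟩
    · rw [mem_invSet, hwu, hwv]
      exact ⟨hvm.1, hvm.2, hum.1, hum.2, hlt', by omega⟩
    · ext ⟨p, q⟩
      rw [Finset.mem_erase, mem_invSet, mem_invSet, hsucc, hsucc]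
      constructor
      · rintro ⟨hp1, hp2, hq1, hq2, hpq, hs⟩
        by_cases h1 : w p = i ∧ w q = i + 1
        · exfalso
          have := (heqil p).mp h1.1
          have := (heqil' q).mp h1.2
          omega
        · by_cases h2 : w p = i + 1 ∧ w q = i
          · exfalso
            rw [h2.1, h2.2] at hs
            simp [sperm, Equiv.swap_apply_left, Equiv.swap_apply_right] at hs
          · have hlt2 := (swap_lt (fun ⟨h3, h4⟩ => h2 ⟨h4, h3⟩) (fun ⟨h3, h4⟩ => h1 ⟨h4, h3⟩)).mp hs
            refine ⟨?_, hp1, hp2, hq1, hq2, hpq, hlt2⟩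
            intro h
            rw [Prod.mk.injEq] at h
            obtain ⟨rfl, rfl⟩ := h
            exact h2 ⟨hwv, hwu⟩
      · rintro ⟨hne, hp1, hp2, hq1, hq2, hpq, hs⟩
        refine ⟨hp1, hp2, hq1, hq2, hpq, (swap_lt ?_ ?_).mpr hs⟩
        · rintro ⟨h3, h4⟩
          exact hne (by rw [Prod.mk.injEq]; exact ⟨(heqil' p).mp h4, (heqil q).mp h3⟩)
        · rintro ⟨h3, h4⟩
          rw [h3, h4] at hs
          omega

end AuxStmt3b

section AuxStmt3c

variable {n : ℕ} {a : ℕ → ℕ}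

lemma invSet_zero : invSet n a 0 = ∅ := by
  ext ⟨p, q⟩
  simp only [Finset.notMem_empty, iff_false]
  rw [mem_invSet]
  intro h
  have : wordProd a 0 q = q := rfl
  have : wordProd a 0 p = p := rfl
  omega

lemma invSet_top (ha : IsReducedWord n a) :
    invSet n a (n * (n - 1) / 2) =
      (Finset.Icc 1 n ×ˢ Finset.Icc 1 n).filter fun pq => pq.1 < pq.2 := by
  ext ⟨p, q⟩
  rw [mem_invSet]
  simp only [Finset.mem_filter, Finset.mem_product, Finset.mem_Icc]
  constructor
  · rintro ⟨h1, h2, h3, h4, h5, _⟩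
    exact ⟨⟨⟨h1, h2⟩, h3, h4⟩, h5⟩
  · rintro ⟨⟨⟨h1, h2⟩, h3, h4⟩, h5⟩
    refine ⟨h1, h2, h3, h4, h5, ?_⟩
    rw [ha.2 p h1 h2, ha.2 q h3 h4]
    omega

lemma card_triangle (n : ℕ) :
    ((Finset.Icc 1 n ×ˢ Finset.Icc 1 n).filter fun pq : ℕ × ℕ => pq.1 < pq.2).card =
      n * (n - 1) / 2 := by
  set B := Finset.Icc 1 n
  set U := (B ×ˢ B).filter fun pq : ℕ × ℕ => pq.1 < pq.2 with hU
  set L := (B ×ˢ B).filter fun pq : ℕ × ℕ => pq.2 < pq.1 with hL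
  have hUL : U ∪ L = B.offDiag := by
    ext ⟨p, q⟩
    simp only [hU, hL, Finset.mem_union, Finset.mem_filter, Finset.mem_product,
      Finset.mem_offDiag]
    constructor
    · rintro (⟨⟨h1, h2⟩, h3⟩ | ⟨⟨h1, h2⟩, h3⟩) <;> exact ⟨h1, h2, by omega⟩
    · rintro ⟨h1, h2, h3⟩
      rcases lt_or_gt_of_ne (show p ≠ q by exact h3) with h | h
      · exact Or.inl ⟨⟨h1, h2⟩, h⟩
      · exact Or.inr ⟨⟨h1, h2⟩, h⟩
  have hdisj : Disjoint U L := by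
    rw [Finset.disjoint_left]
    rintro ⟨p, q⟩ hp hq
    simp only [hU, hL, Finset.mem_filter] at hp hq
    omega
  have hcard : L.card = U.card := by
    apply Finset.card_bij (fun pq _ => pq.swap)
    · rintro ⟨p, q⟩ hpq
      simp only [hU, hL, Finset.mem_filter, Finset.mem_product] at hpq ⊢
      exact ⟨⟨hpq.1.2, hpq.1.1⟩, hpq.2⟩
    · rintro ⟨p, q⟩ _ ⟨p', q'⟩ _ h
      simpa [Prod.ext_iff, and_comm] using h
    · rintro ⟨p, q⟩ hpq
      refine ⟨(q, p), ?_, rfl⟩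
      simp only [hU, hL, Finset.mem_filter, Finset.mem_product] at hpq ⊢
      exact ⟨⟨hpq.1.2, hpq.1.1⟩, hpq.2⟩
  have hoff : B.offDiag.card = n * n - n := by
    rw [Finset.offDiag_card]
    have : B.card = n := by simp [B, Nat.card_Icc]
    rw [this]
  have htot : U.card + L.card = n * n - n := by
    rw [← hoff, ← hUL, Finset.card_union_of_disjoint hdisj]
  have hnn : n * n = n * (n - 1) + n := by
    cases n with
    | zero => rfl
    | succ t => rw [Nat.succ_sub_one]; ring
  omega

lemma card_invSet (ha : IsReducedWord n a) :
    ∀ k, k ≤ n * (n - 1) / 2 → (invSet n a k).card = k := by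
  have hup : ∀ k, k ≤ n * (n - 1) / 2 → (invSet n a k).card ≤ k := by
    intro k
    induction k with
    | zero => intro _; simp [invSet_zero]
    | succ k ih =>
      intro hk
      rcases invSet_step ha hk with ⟨u, v, _, _, hnm, heq⟩ | ⟨u, v, _, hm, heq⟩
      · rw [heq, Finset.card_insert_of_notMem hnm]
        have := ih (by omega)
        omega
      · rw [heq]
        have h1 := Finset.card_erase_le (s := invSet n a k) (a := (v, u))
        have := ih (by omega)
        omega
  have hdown : ∀ d k, k + d = n * (n - 1) / 2 → n * (n - 1) / 2 ≤ (invSet n a k).card + d := by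
    intro d
    induction d with
    | zero =>
      intro k hk
      have : k = n * (n - 1) / 2 := by omega
      subst this
      rw [invSet_top ha, card_triangle]
      omega
    | succ d ih =>
      intro k hk
      have hstep : (invSet n a (k + 1)).card ≤ (invSet n a k).card + 1 := by
        rcases invSet_step ha (show k + 1 ≤ n * (n - 1) / 2 by omega) with ⟨u, v, _, _, hnm, heq⟩ | ⟨u, v, _, hm, heq⟩
        · rw [heq, Finset.card_insert_of_notMem hnm]
        · rw [heq]
          have := Finset.card_erase_le (s := invSet n a k) (a := (v, u))
          omega
      have := ih (k + 1) (by omega)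
      omega
  intro k hk
  have h1 := hup k hk
  have h2 := hdown (n * (n - 1) / 2 - k) k (by omega)
  omega

lemma mem_invSet_iff_tau (ha : IsReducedWord n a) :
    ∀ k, k ≤ n * (n - 1) / 2 → ∀ p q : ℕ,
      ((p, q) ∈ invSet n a k ↔ ∃ i, 1 ≤ i ∧ i ≤ k ∧ tauRoot a i = (p, q)) := by
  intro k
  induction k with
  | zero =>
    intro _ p q
    simp only [invSet_zero, Finset.notMem_empty, false_iff]
    rintro ⟨i, h1, h2, _⟩
    omega
  | succ k ih =>
    intro hk p q
    rcases invSet_step ha hk with ⟨u, v, huv, htau, hnm, heq⟩ | ⟨u, v, _, hm, heq⟩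
    · rw [heq, Finset.mem_insert, ih (by omega)]
      constructor
      · rintro (h | ⟨i, h1, h2, h3⟩)
        · exact ⟨k + 1, by omega, le_refl _, htau.trans h.symm⟩
        · exact ⟨i, h1, by omega, h3⟩
      · rintro ⟨i, h1, h2, h3⟩
        rcases Nat.lt_or_ge i (k + 1) with h | h
        · exact Or.inr ⟨i, h1, by omega, h3⟩
        · have : i = k + 1 := by omega
          subst this
          exact Or.inl (h3.symm.trans htau)
    · exfalso
      have c1 := card_invSet ha (k + 1) hk
      have c0 := card_invSet ha k (by omega)
      rw [heq, Finset.card_erase_of_mem hm, c0] at c1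
      omega

lemma tau_char (ha : IsReducedWord n a) {k : ℕ} (hk : k ≤ n * (n - 1) / 2) (p q : ℕ) :
    (∃ i, 1 ≤ i ∧ i ≤ k ∧ tauRoot a i = (p, q)) ↔
    (1 ≤ p ∧ p ≤ n ∧ 1 ≤ q ∧ q ≤ n ∧ p < q ∧ wordProd a k q < wordProd a k p) := by
  rw [← mem_invSet_iff_tau ha k hk, mem_invSet]

end AuxStmt3c

section AuxStmt3d

lemma Emat_mul {n b : ℕ} (hb1 : 1 ≤ b) (hb2 : b ≤ n) (p c d : ℕ) :
    Emat n p b * Emat n c d = if b = c then Emat n p d else 0 := by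
  ext x y
  rw [Matrix.mul_apply]
  rw [Finset.sum_eq_single (⟨b - 1, by omega⟩ : Fin n)]
  · have hb : ((⟨b - 1, by omega⟩ : Fin n) : ℕ) + 1 = b := by simp; omega
    simp only [Emat, Matrix.of_apply, hb]
    by_cases hbc : b = c
    · subst hbc
      simp only [if_pos rfl]
      by_cases h1 : (x : ℕ) + 1 = p <;> by_cases h2 : (y : ℕ) + 1 = d <;>
        simp [h1, h2]
    · simp only [if_neg hbc, Matrix.zero_apply]
      split_ifs <;> simp_all
  · intro t _ ht
    have : (t : ℕ) + 1 ≠ b := by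
      intro h
      exact ht (Fin.ext (by simp; omega))
    simp [Emat, this]
  · intro h
    exact absurd (Finset.mem_univ _) h

end AuxStmt3d

section AuxStmt3e

variable {n : ℕ} {a : ℕ → ℕ}

/-- The set of index pairs of generators of `V_j`. -/
def TT (n : ℕ) (a : ℕ → ℕ) (m j p q : ℕ) : Prop :=
  (∃ i, 1 ≤ i ∧ i ≤ j ∧ p = wordProd a (m - 1) (tauRoot a i).2 ∧
      q = wordProd a (m - 1) (tauRoot a i).1) ∨
  (1 ≤ p ∧ p < q ∧ q ≤ n ∧ (wordProd a (m - 1)).symm p < (wordProd a (m - 1)).symm q)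

variable (ha : IsReducedWord n a) {m j : ℕ} (hm1 : 1 ≤ m) (hm2 : m ≤ n * (n - 1) / 2)
  (hj : j ≤ m - 1)

include ha hm1 hm2 hj

lemma TT_A_iff (p q : ℕ) :
    (∃ i, 1 ≤ i ∧ i ≤ j ∧ p = wordProd a (m - 1) (tauRoot a i).2 ∧
        q = wordProd a (m - 1) (tauRoot a i).1) ↔
    (1 ≤ (wordProd a (m - 1)).symm q ∧ (wordProd a (m - 1)).symm q ≤ n ∧
     1 ≤ (wordProd a (m - 1)).symm p ∧ (wordProd a (m - 1)).symm p ≤ n ∧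
     (wordProd a (m - 1)).symm q < (wordProd a (m - 1)).symm p ∧
     wordProd a j ((wordProd a (m - 1)).symm p) < wordProd a j ((wordProd a (m - 1)).symm q)) := by
  rw [← tau_char ha (show j ≤ n * (n - 1) / 2 by omega)]
  constructor
  · rintro ⟨i, h1, h2, rfl, rfl⟩
    refine ⟨i, h1, h2, ?_⟩
    simp
  · rintro ⟨i, h1, h2, h3⟩
    refine ⟨i, h1, h2, ?_, ?_⟩ <;> rw [h3] <;> simp

lemma TT_bounds {p q : ℕ} (h : TT n a m j p q) : 1 ≤ p ∧ p < q ∧ q ≤ n := by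
  rcases h with ⟨i, h1, h2, rfl, rfl⟩ | ⟨h1, h2, h3, _⟩
  · have hc := (tau_char ha (show m - 1 ≤ n * (n - 1) / 2 by omega)
      (tauRoot a i).1 (tauRoot a i).2).mp ⟨i, h1, by omega, rfl⟩
    obtain ⟨hp1, hp2, hq1, hq2, _, hlt⟩ := hc
    have r1 := wordProd_mem ha (show m - 1 ≤ n * (n - 1) / 2 by omega) hq1 hq2
    have r2 := wordProd_mem ha (show m - 1 ≤ n * (n - 1) / 2 by omega) hp1 hp2
    exact ⟨r1.1, hlt, r2.2⟩
  · exact ⟨h1, h2, h3⟩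

lemma TT_noninv {x y : ℕ} (h1 : 1 ≤ x) (h2 : x < y) (h3 : y ≤ n)
    (h4 : wordProd a (m - 1) x < wordProd a (m - 1) y) :
    wordProd a j x ≤ wordProd a j y := by
  by_contra hcon
  push_neg at hcon
  obtain ⟨i, hi1, hi2, hi3⟩ :=
    (tau_char ha (show j ≤ n * (n - 1) / 2 by omega) x y).mpr
      ⟨h1, by omega, by omega, h3, h2, hcon⟩
  have := (tau_char ha (show m - 1 ≤ n * (n - 1) / 2 by omega) x y).mp
    ⟨i, hi1, by omega, hi3⟩
  omega

lemma TT_close {x y z : ℕ} (hxy : TT n a m j x y) (hyz : TT n a m j y z) :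
    TT n a m j x z := by
  obtain ⟨hx1, hxy2, hy2⟩ := TT_bounds ha hm1 hm2 hj hxy
  obtain ⟨hy1, hyz2, hz2⟩ := TT_bounds ha hm1 hm2 hj hyz
  have hNm : m - 1 ≤ n * (n - 1) / 2 := by omega
  have hfx := wordProd_symm_mem ha hNm hx1 (by omega)
  have hfy := wordProd_symm_mem ha hNm hy1 hy2
  have hfz := wordProd_symm_mem ha hNm (by omega : 1 ≤ z) hz2
  have happ : ∀ t, wordProd a (m - 1) ((wordProd a (m - 1)).symm t) = t := fun t => Equiv.apply_symm_apply _ t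
  rcases hxy with hAxy | hBxy <;> rcases hyz with hAyz | hByz
  · rw [TT_A_iff ha hm1 hm2 hj] at hAxy hAyz
    obtain ⟨_, _, _, _, q1, g1⟩ := hAxy
    obtain ⟨_, _, _, _, q2, g2⟩ := hAyz
    left
    rw [TT_A_iff ha hm1 hm2 hj]
    exact ⟨hfz.1, hfz.2, hfx.1, hfx.2, by omega, by omega⟩
  · rw [TT_A_iff ha hm1 hm2 hj] at hAxy
    obtain ⟨_, _, _, _, q1, g1⟩ := hAxy
    obtain ⟨_, _, _, q2⟩ := hByz
    rcases lt_trichotomy ((wordProd a (m - 1)).symm x) ((wordProd a (m - 1)).symm z) with h | h | h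
    · exact Or.inr ⟨hx1, by omega, hz2, h⟩
    · exfalso
      have hxz : x = z := by
        have := congrArg (wordProd a (m - 1)) h
        rwa [happ, happ] at this
      omega
    · left
      rw [TT_A_iff ha hm1 hm2 hj]
      refine ⟨hfz.1, hfz.2, hfx.1, hfx.2, h, ?_⟩
      have hle : wordProd a j ((wordProd a (m - 1)).symm y) ≤ wordProd a j ((wordProd a (m - 1)).symm z) := by
        apply TT_noninv ha hm1 hm2 hj hfy.1 q2 hfz.2
        rw [happ, happ]
        omega
      omega
  · obtain ⟨_, _, _, q1⟩ := hBxy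
    rw [TT_A_iff ha hm1 hm2 hj] at hAyz
    obtain ⟨_, _, _, _, q2, g2⟩ := hAyz
    rcases lt_trichotomy ((wordProd a (m - 1)).symm x) ((wordProd a (m - 1)).symm z) with h | h | h
    · exact Or.inr ⟨hx1, by omega, hz2, h⟩
    · exfalso
      have hxz : x = z := by
        have := congrArg (wordProd a (m - 1)) h
        rwa [happ, happ] at this
      omega
    · left
      rw [TT_A_iff ha hm1 hm2 hj]
      refine ⟨hfz.1, hfz.2, hfx.1, hfx.2, h, ?_⟩
      have hle : wordProd a j ((wordProd a (m - 1)).symm x) ≤ wordProd a j ((wordProd a (m - 1)).symm y) := by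
        apply TT_noninv ha hm1 hm2 hj hfx.1 q1 hfy.2
        rw [happ, happ]
        omega
      omega
  · obtain ⟨_, _, _, q1⟩ := hBxy
    obtain ⟨_, _, _, q2⟩ := hByz
    exact Or.inr ⟨hx1, by omega, hz2, q1.trans q2⟩

end AuxStmt3e


/-- for a reduced word of `w₀`, `1 ≤ m ≤ N`, `σ = s_{a_{m-1}} ∘ ⋯ ∘ s_{a_1}`, and
`0 ≤ j ≤ m - 1`, the span `V_j` of the matrix units `E_{σ(q_i) σ(p_i)}` for `1 ≤ i ≤ j`
together with all matrix units `E_{a b}` with `a < b` and `σ⁻¹(a) < σ⁻¹(b)` is closed under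
the commutator bracket, i.e. it is a Lie subalgebra of the strictly upper triangular
matrices. -/
theorem stmt3 (n : ℕ) (hn : 2 ≤ n) (a : ℕ → ℕ) (ha : IsReducedWord n a)
    (m : ℕ) (hm1 : 1 ≤ m) (hm2 : m ≤ n * (n - 1) / 2)
    (j : ℕ) (hj : j ≤ m - 1) :
    ∀ X ∈ Submodule.span ℂ
        ({M : Matrix (Fin n) (Fin n) ℂ | ∃ i, 1 ≤ i ∧ i ≤ j ∧
            M = Emat n (wordProd a (m - 1) (tauRoot a i).2) (wordProd a (m - 1) (tauRoot a i).1)} ∪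
         {M : Matrix (Fin n) (Fin n) ℂ | ∃ p q : ℕ, 1 ≤ p ∧ p < q ∧ q ≤ n ∧
            (wordProd a (m - 1)).symm p < (wordProd a (m - 1)).symm q ∧ M = Emat n p q}),
      ∀ Y ∈ Submodule.span ℂ
        ({M : Matrix (Fin n) (Fin n) ℂ | ∃ i, 1 ≤ i ∧ i ≤ j ∧
            M = Emat n (wordProd a (m - 1) (tauRoot a i).2) (wordProd a (m - 1) (tauRoot a i).1)} ∪
         {M : Matrix (Fin n) (Fin n) ℂ | ∃ p q : ℕ, 1 ≤ p ∧ p < q ∧ q ≤ n ∧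
            (wordProd a (m - 1)).symm p < (wordProd a (m - 1)).symm q ∧ M = Emat n p q}),
      X * Y - Y * X ∈ Submodule.span ℂ
        ({M : Matrix (Fin n) (Fin n) ℂ | ∃ i, 1 ≤ i ∧ i ≤ j ∧
            M = Emat n (wordProd a (m - 1) (tauRoot a i).2) (wordProd a (m - 1) (tauRoot a i).1)} ∪
         {M : Matrix (Fin n) (Fin n) ℂ | ∃ p q : ℕ, 1 ≤ p ∧ p < q ∧ q ≤ n ∧
            (wordProd a (m - 1)).symm p < (wordProd a (m - 1)).symm q ∧ M = Emat n p q}) := by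
  intro X hX Y hY
  set S : Set (Matrix (Fin n) (Fin n) ℂ) :=
    ({M : Matrix (Fin n) (Fin n) ℂ | ∃ i, 1 ≤ i ∧ i ≤ j ∧
        M = Emat n (wordProd a (m - 1) (tauRoot a i).2) (wordProd a (m - 1) (tauRoot a i).1)} ∪
     {M : Matrix (Fin n) (Fin n) ℂ | ∃ p q : ℕ, 1 ≤ p ∧ p < q ∧ q ≤ n ∧
        (wordProd a (m - 1)).symm p < (wordProd a (m - 1)).symm q ∧ M = Emat n p q}) with hSdef
  have hget : ∀ x ∈ S, ∃ p q, TT n a m j p q ∧ x = Emat n p q := by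
    rintro x (⟨i, h1, h2, rfl⟩ | ⟨p, q, h1, h2, h3, h4, rfl⟩)
    · exact ⟨_, _, Or.inl ⟨i, h1, h2, rfl, rfl⟩, rfl⟩
    · exact ⟨p, q, Or.inr ⟨h1, h2, h3, h4⟩, rfl⟩
  have hput : ∀ p q, TT n a m j p q → Emat n p q ∈ S := by
    rintro p q (⟨i, h1, h2, rfl, rfl⟩ | ⟨h1, h2, h3, h4⟩)
    · exact Or.inl ⟨i, h1, h2, rfl⟩
    · exact Or.inr ⟨p, q, h1, h2, h3, h4, rfl⟩
  induction hX, hY using Submodule.span_induction₂ with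
  | mem_mem x y hx hy =>
    obtain ⟨p, q, hT, rfl⟩ := hget x hx
    obtain ⟨r, s, hT', rfl⟩ := hget y hy
    obtain ⟨hb1, hb2, hb3⟩ := TT_bounds ha hm1 hm2 hj hT
    obtain ⟨hc1, hc2, hc3⟩ := TT_bounds ha hm1 hm2 hj hT'
    rw [Emat_mul (show 1 ≤ q by omega) (show q ≤ n by omega),
        Emat_mul (show 1 ≤ s by omega) (show s ≤ n by omega)]
    by_cases h1 : q = r <;> by_cases h2 : s = p
    · exfalso
      omega
    · subst h1
      rw [if_pos rfl, if_neg h2, sub_zero]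
      exact Submodule.subset_span (hput _ _ (TT_close ha hm1 hm2 hj hT hT'))
    · subst h2
      rw [if_neg h1, if_pos rfl, zero_sub]
      exact neg_mem (Submodule.subset_span (hput _ _ (TT_close ha hm1 hm2 hj hT' hT)))
    · rw [if_neg h1, if_neg h2, sub_zero]
      exact zero_mem _
  | zero_left y hy => simp
  | zero_right x hx => simp
  | add_left x y z hx hy hz h1 h2 =>
    have heq : (x + y) * z - z * (x + y) = (x * z - z * x) + (y * z - z * y) := by
      noncomm_ring
    rw [heq]
    exact add_mem h1 h2
  | add_right x y z hx hy hz h1 h2 =>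
    have heq : x * (y + z) - (y + z) * x = (x * y - y * x) + (x * z - z * x) := by
      noncomm_ring
    rw [heq]
    exact add_mem h1 h2
  | smul_left r x y hx hy h =>
    have heq : (r • x) * y - y * (r • x) = r • (x * y - y * x) := by
      rw [Matrix.smul_mul, Matrix.mul_smul, smul_sub]
    rw [heq]
    exact Submodule.smul_mem _ r h
  | smul_right r x y hx hy h =>
    have heq : x * (r • y) - (r • y) * x = r • (x * y - y * x) := by
      rw [Matrix.smul_mul, Matrix.mul_smul, smul_sub]
    rw [heq]
    exact Submodule.smul_mem _ r h
end
end

section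
/- For all ζ_1, ζ_2, ζ_3 ∈ ℂ², the unitriangular factors of F(ζ_1,ζ_2,ζ_3) = l·u admit the ordered exponential factorizations l = (I + ζ_3⁻E_{32})·(I + ζ_2⁻E_{31})·(I + (ζ_2⁻ζ_3⁺ + ζ_1⁻)E_{21}) and u = (I + (−ζ_1⁻ζ_2⁺ + ζ_3⁺)E_{23})·(I + ζ_2⁺E_{13})·(I + ζ_1⁺E_{12}); that is, F(ζ_1,ζ_2,ζ_3) equals the product of these six matrices in the indicated order. -/
open Matrix

noncomputable section

/-- The forward map for the reduced factorization `w₀ = s₁s₂s₁` of the longest element of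
`S₃` (ordering `τ₁ = (1,2)`, `τ₂ = (1,3)`, `τ₃ = (2,3)`). -/
def F3 (z1 z2 z3 : ℂ × ℂ) : Matrix (Fin 3) (Fin 3) ℂ :=
  iMat 3 (2, 3) z3 * iMat 3 (1, 3) z2 * iMat 3 (1, 2) z1

/-- the ordered exponential factorization of the unitriangular factors of
`F(ζ₁, ζ₂, ζ₃) = l · u` in `GL(3, ℂ)`. -/
theorem stmt10 (z1 z2 z3 : ℂ × ℂ) :
    F3 z1 z2 z3 =
      ((1 + z3.1 • Emat 3 3 2) * (1 + z2.1 • Emat 3 3 1) *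
        (1 + (z2.1 * z3.2 + z1.1) • Emat 3 2 1)) *
      ((1 + (-z1.1 * z2.2 + z3.2) • Emat 3 2 3) * (1 + z2.2 • Emat 3 1 3) *
        (1 + z1.2 • Emat 3 1 2)) := by
  ext i j
  fin_cases i <;> fin_cases j <;>
    simp [F3, iMat, Emat, Matrix.mul_apply, Fin.sum_univ_three, Matrix.one_apply] <;> ring
end
end

section
/- Let l be a 3×3 lower unitriangular matrix with subdiagonal entries l_{21}, l_{31}, l_{32} and u a 3×3 upper unitriangular matrix with entries u_{12}, u_{13}, u_{23}, and suppose D := 1 + l_{31}u_{13} − l_{21}l_{32}u_{13} ≠ 0. Define ζ_3⁻ = l_{32}, ζ_2⁻ = l_{31} − l_{21}l_{32}, ζ_1⁻ = (l_{21} − l_{31}u_{23} + l_{21}l_{32}u_{23})/D, ζ_3⁺ = (l_{21}u_{13} + u_{23})/D, ζ_2⁺ = u_{13}, ζ_1⁺ = u_{12}. Then F(ζ_1,ζ_2,ζ_3) = l·u. -/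
open Matrix

noncomputable section

/-!
Multiplying out the three root-subgroup factors gives `F` as an explicit matrix whose entries
are polynomial in the coordinates. With the given coordinates one has `1 + ζ₂⁻ζ₂⁺ = D` and
`(1 + ζ₃⁻ζ₃⁺) D = (l u)₃₃`, and clearing the denominator `D` turns every entry of the
claimed identity into a polynomial identity.
-/

lemma iMat_two_three (z : ℂ × ℂ) :
    iMat 3 (2, 3) z = !![1, 0, 0; 0, 1, z.2; 0, z.1, 1 + z.1 * z.2] := by
  ext i j
  fin_cases i <;> fin_cases j <;> simp [iMat, Emat]

lemma iMat_one_three (z : ℂ × ℂ) :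
    iMat 3 (1, 3) z = !![1, 0, z.2; 0, 1, 0; z.1, 0, 1 + z.1 * z.2] := by
  ext i j
  fin_cases i <;> fin_cases j <;> simp [iMat, Emat]

lemma iMat_one_two (z : ℂ × ℂ) :
    iMat 3 (1, 2) z = !![1, z.2, 0; z.1, 1 + z.1 * z.2, 0; 0, 0, 1] := by
  ext i j
  fin_cases i <;> fin_cases j <;> simp [iMat, Emat]

lemma F3_eq (z1 z2 z3 : ℂ × ℂ) :
    F3 z1 z2 z3 =
      !![1, z1.2, z2.2;
        z3.2 * z2.1 + z1.1, z3.2 * z2.1 * z1.2 + (1 + z1.1 * z1.2), z3.2 * (1 + z2.1 * z2.2);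
        (1 + z3.1 * z3.2) * z2.1 + z3.1 * z1.1,
          (1 + z3.1 * z3.2) * z2.1 * z1.2 + z3.1 * (1 + z1.1 * z1.2),
          (1 + z3.1 * z3.2) * (1 + z2.1 * z2.2)] := by
  rw [F3, iMat_two_three, iMat_one_three, iMat_one_two]
  ext i j
  fin_cases i <;> fin_cases j <;> simp

/-- the rational inverse of the forward map in standard coordinates: given
unitriangular `l`, `u` with `D = 1 + l₃₁u₁₃ − l₂₁l₃₂u₁₃ ≠ 0`, the indicated root subgroup
coordinates `ζ₁ = (ζ₁⁻, ζ₁⁺)`, `ζ₂ = (ζ₂⁻, ζ₂⁺)`, `ζ₃ = (ζ₃⁻, ζ₃⁺)` satisfy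
`F(ζ₁, ζ₂, ζ₃) = l · u`. -/
theorem stmt11 (l21 l31 l32 u12 u13 u23 : ℂ)
    (hD : 1 + l31 * u13 - l21 * l32 * u13 ≠ 0) :
    F3 ((l21 - l31 * u23 + l21 * l32 * u23) / (1 + l31 * u13 - l21 * l32 * u13), u12)
       (l31 - l21 * l32, u13)
       (l32, (l21 * u13 + u23) / (1 + l31 * u13 - l21 * l32 * u13)) =
    !![(1 : ℂ), 0, 0; l21, 1, 0; l31, l32, 1] *
      !![(1 : ℂ), u12, u13; 0, 1, u23; 0, 0, 1] := by
  rw [F3_eq, mul_fin_three]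
  -- with `D` an atom, `field_simp` can use `hD`; it is unfolded again once denominators are gone
  generalize hE : 1 + l31 * u13 - l21 * l32 * u13 = D at hD ⊢
  ext i j
  fin_cases i <;> fin_cases j <;>
    simp only [Fin.zero_eta, Fin.mk_one, Fin.reduceFinMk, Fin.isValue, of_apply, cons_val',
      cons_val, cons_val_zero, cons_val_one, cons_val_fin_one, mul_one, mul_zero, add_zero,
      one_mul, zero_mul] <;>
    field_simp <;> subst hE <;> ring
end
end

section
/- The forward map F induces a bijective correspondence between {(ζ_1,ζ_2,ζ_3) ∈ (ℂ²)³ : 1 + ζ_2⁻ζ_2⁺ ≠ 0} and {(l_1,l_2,l_3,u_1,u_2,u_3) ∈ ℂ⁶ : 1 + l_2u_2 ≠ 0}, under the relation F(ζ_1,ζ_2,ζ_3) = (I + l_3E_{32})(I + l_2E_{31})(I + l_1E_{21})·(I + u_3E_{23})(I + u_2E_{13})(I + u_1E_{12}); the inverse correspondence is given by ζ_3⁻ = l_3, ζ_2⁻ = l_2, ζ_1⁻ = (l_1 − l_2u_3)/(1 + l_2u_2), ζ_3⁺ = (u_2l_1 + u_3)/(1 + l_2u_2), ζ_2⁺ =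 u_2, ζ_1⁺ = u_1. -/
open Matrix

noncomputable section

/-- The lower ordered exponential product `(I + l₃E₃₂)(I + l₂E₃₁)(I + l₁E₂₁)`. -/
def Lmat (l1 l2 l3 : ℂ) : Matrix (Fin 3) (Fin 3) ℂ :=
  (1 + l3 • Emat 3 3 2) * (1 + l2 • Emat 3 3 1) * (1 + l1 • Emat 3 2 1)

/-- The upper ordered exponential product `(I + u₃E₂₃)(I + u₂E₁₃)(I + u₁E₁₂)`. -/
def Umat (u1 u2 u3 : ℂ) : Matrix (Fin 3) (Fin 3) ℂ :=
  (1 + u3 • Emat 3 2 3) * (1 + u2 • Emat 3 1 3) * (1 + u1 • Emat 3 1 2)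

/-!
Both sides are explicit 3 × 3 matrices. Comparing the entries above the diagonal and below it
gives `ζ₁⁺ = u₁`, `ζ₂⁺ = u₂`, and a triangular system for the remaining coordinates which
determines `ζ₃⁻ = l₃`, `ζ₂⁻ = l₂` and then `ζ₁⁻`, `ζ₃⁺` rationally, with denominator
`1 + ζ₂⁻ζ₂⁺ = 1 + l₂u₂`; in particular the two nondegeneracy conditions coincide.
-/

lemma F3_mk (a A b B c C : ℂ) : F3 (a, A) (b, B) (c, C) =
    !![1, A, B;
       a + C * b, 1 + a * A + C * b * A, C * (1 + b * B);
       c * a + (1 + c * C) * b, c * (1 + a * A) + (1 + c * C) * b * A, (1 + c * C) * (1 + b * B)] := by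
  ext i j
  fin_cases i <;> fin_cases j <;>
    simp [F3, iMat, Emat, Matrix.mul_apply, Fin.sum_univ_three, Matrix.one_apply] <;> ring

lemma Lmat_mul_Umat (l1 l2 l3 u1 u2 u3 : ℂ) : Lmat l1 l2 l3 * Umat u1 u2 u3 =
    !![1, u1, u2;
       l1, l1 * u1 + 1, l1 * u2 + u3;
       l2 + l3 * l1, (l2 + l3 * l1) * u1 + l3, (l2 + l3 * l1) * u2 + l3 * u3 + 1] := by
  ext i j
  fin_cases i <;> fin_cases j <;>
    simp [Lmat, Umat, Emat, Matrix.mul_apply, Fin.sum_univ_three, Matrix.one_apply]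

lemma F3_mk_eq_Lmat_mul_Umat (a A b B c C : ℂ) :
    F3 (a, A) (b, B) (c, C) =
      Lmat (a + C * b) b c * Umat A B (C * (1 + b * B) - (a + C * b) * B) := by
  rw [F3_mk, Lmat_mul_Umat]
  ext i j
  fin_cases i <;> fin_cases j <;> simp <;> ring

lemma F3_inverse_eq_Lmat_mul_Umat {l1 l2 l3 u1 u2 u3 : ℂ} (hl : 1 + l2 * u2 ≠ 0) :
    F3 ((l1 - l2 * u3) / (1 + l2 * u2), u1) (l2, u2) (l3, (u2 * l1 + u3) / (1 + l2 * u2)) =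
      Lmat l1 l2 l3 * Umat u1 u2 u3 := by
  have hl' : 1 + u2 * l2 ≠ 0 := by rwa [mul_comm u2 l2]
  rw [F3_mk, Lmat_mul_Umat]
  ext i j
  fin_cases i <;> fin_cases j <;> simp <;> field_simp <;> ring

lemma coords_of_F3_eq_Lmat_mul_Umat {z1 z2 z3 : ℂ × ℂ} {l1 l2 l3 u1 u2 u3 : ℂ}
    (hl : 1 + l2 * u2 ≠ 0) (h : F3 z1 z2 z3 = Lmat l1 l2 l3 * Umat u1 u2 u3) :
    z3.1 = l3 ∧ z2.1 = l2 ∧ z1.1 = (l1 - l2 * u3) / (1 + l2 * u2) ∧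
      z3.2 = (u2 * l1 + u3) / (1 + l2 * u2) ∧ z2.2 = u2 ∧ z1.2 = u1 := by
  obtain ⟨a, A⟩ := z1
  obtain ⟨b, B⟩ := z2
  obtain ⟨c, C⟩ := z3
  rw [F3_mk, Lmat_mul_Umat] at h
  have entry (i j : Fin 3) := congrFun (congrFun h i) j
  have e12 : A = u1 := by simpa using entry 0 1
  have e13 : B = u2 := by simpa using entry 0 2
  have e21 : a + C * b = l1 := by simpa using entry 1 0
  have e23 : C * (1 + b * B) = l1 * u2 + u3 := by simpa using entry 1 2
  have e31 : c * a + (1 + c * C) * b = l2 + l3 * l1 := by simpa using entry 2 0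
  have e32 : c * (1 + a * A) + (1 + c * C) * b * A = (l2 + l3 * l1) * u1 + l3 := by
    simpa using entry 2 1
  have hc : c = l3 := by linear_combination e32 - A * e31 - (l2 + l3 * l1) * e12
  have hb : b = l2 := by linear_combination e31 - c * e21 - l1 * hc
  refine ⟨hc, hb, ?_, ?_, e13, e12⟩
  · rw [eq_div_iff hl]
    linear_combination (1 + l2 * u2) * e21 - l2 * e23 - C * hb + C * b * l2 * e13
  · rw [eq_div_iff hl]
    linear_combination e23 - C * l2 * e13 - C * B * hb

/-- `F` induces a bijective correspondence between
`{ζ : 1 + ζ₂⁻ζ₂⁺ ≠ 0}` and `{(l, u) : 1 + l₂u₂ ≠ 0}` (in ordered exponential coordinates),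
with the indicated rational inverse. -/
theorem stmt12 :
    (∀ z1 z2 z3 : ℂ × ℂ, 1 + z2.1 * z2.2 ≠ 0 →
      ∃ l1 l2 l3 u1 u2 u3 : ℂ, 1 + l2 * u2 ≠ 0 ∧
        F3 z1 z2 z3 = Lmat l1 l2 l3 * Umat u1 u2 u3) ∧
    (∀ l1 l2 l3 u1 u2 u3 : ℂ, 1 + l2 * u2 ≠ 0 →
      ∃! z : (ℂ × ℂ) × (ℂ × ℂ) × (ℂ × ℂ),
        1 + z.2.1.1 * z.2.1.2 ≠ 0 ∧
        F3 z.1 z.2.1 z.2.2 = Lmat l1 l2 l3 * Umat u1 u2 u3) ∧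
    (∀ (z1 z2 z3 : ℂ × ℂ) (l1 l2 l3 u1 u2 u3 : ℂ),
      1 + z2.1 * z2.2 ≠ 0 → 1 + l2 * u2 ≠ 0 →
      F3 z1 z2 z3 = Lmat l1 l2 l3 * Umat u1 u2 u3 →
      z3.1 = l3 ∧ z2.1 = l2 ∧ z1.1 = (l1 - l2 * u3) / (1 + l2 * u2) ∧
      z3.2 = (u2 * l1 + u3) / (1 + l2 * u2) ∧ z2.2 = u2 ∧ z1.2 = u1) := by
  refine ⟨?_, fun l1 l2 l3 u1 u2 u3 hl => ?_,
    fun _ _ _ _ _ _ _ _ _ _ hl h => coords_of_F3_eq_Lmat_mul_Umat hl h⟩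
  · rintro ⟨a, A⟩ ⟨b, B⟩ ⟨c, C⟩ hz
    exact ⟨_, _, _, _, _, _, hz, F3_mk_eq_Lmat_mul_Umat a A b B c C⟩
  · refine ⟨(((l1 - l2 * u3) / (1 + l2 * u2), u1), (l2, u2), (l3, (u2 * l1 + u3) / (1 + l2 * u2))),
      ⟨hl, F3_inverse_eq_Lmat_mul_Umat hl⟩, ?_⟩
    rintro ⟨⟨a, A⟩, ⟨b, B⟩, ⟨c, C⟩⟩ ⟨-, h⟩
    obtain ⟨hc, hb, ha, hC, hB, hA⟩ := coords_of_F3_eq_Lmat_mul_Umat hl h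
    simp only at hc hb ha hC hB hA
    rw [hc, hb, ha, hC, hB, hA]
end
end

section
/- There exists a matrix g ∈ GL(3,ℂ) all of whose leading principal minors equal 1 (so that g = l·u with l lower unitriangular and u upper unitriangular) such that g is not in the image of F and g is not in the image of F′. In other words, the two root subgroup coordinate charts corresponding to the two reduced factorizations of the longest element of S_3 do not cover the top Birkhoff component. -/
open Matrix

noncomputable section

/-- The forward map for the other reduced factorization `w₀ = s₂s₁s₂` of the longest
element of `S₃` (ordering `τ′₁ = (2,3)`, `τ′₂ = (1,3)`, `τ′₃ = (1,2)`). -/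
def F3' (z1 z2 z3 : ℂ × ℂ) : Matrix (Fin 3) (Fin 3) ℂ :=
  iMat 3 (1, 2) z3 * iMat 3 (1, 3) z2 * iMat 3 (2, 3) z1

/-- there is a matrix `g ∈ GL(3, ℂ)` with all leading principal minors equal
to `1` (hence `g = l · u` with `l` lower unitriangular, `u` upper unitriangular) which is in
the image of neither of the two root subgroup coordinate charts: the charts do not cover the
top Birkhoff component. -/
theorem stmt13 :
    ∃ g : Matrix (Fin 3) (Fin 3) ℂ,
      (∀ (k : ℕ) (hk : k ≤ 3), (g.submatrix (Fin.castLE hk) (Fin.castLE hk)).det = 1) ∧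
      (∃ l u : Matrix (Fin 3) (Fin 3) ℂ,
        ((∀ i, l i i = 1) ∧ ∀ i j : Fin 3, i < j → l i j = 0) ∧
        ((∀ i, u i i = 1) ∧ ∀ i j : Fin 3, j < i → u i j = 0) ∧
        g = l * u) ∧
      (∀ z1 z2 z3 : ℂ × ℂ, F3 z1 z2 z3 ≠ g) ∧
      (∀ z1 z2 z3 : ℂ × ℂ, F3' z1 z2 z3 ≠ g) := by
  refine ⟨!![1,0,1;0,1,1;-1,1,1], ?_, ?_, ?_, ?_⟩
  · intro k hk
    interval_cases k
    · simp [Matrix.det_fin_zero]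
    · simp [Matrix.det_fin_one]
    · simp [Matrix.det_fin_two, show Fin.castLE (by norm_num : (2:ℕ) ≤ 3) 0 = 0 from rfl,
        show Fin.castLE (by norm_num : (2:ℕ) ≤ 3) 1 = 1 from rfl]
    · simp [Matrix.det_fin_three, show Fin.castLE (by norm_num : (3:ℕ) ≤ 3) = id from rfl,
        Matrix.vecHead, Matrix.vecTail]
  · refine ⟨!![1,0,0;0,1,0;-1,1,1], !![1,0,1;0,1,1;0,0,1], ⟨?_, ?_⟩, ⟨?_, ?_⟩, ?_⟩
    · intro i; fin_cases i <;> norm_num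
    · intro i j hij; fin_cases i <;> fin_cases j <;> simp_all [Matrix.vecHead, Matrix.vecTail]
    · intro i; fin_cases i <;> norm_num
    · intro i j hij; fin_cases i <;> fin_cases j <;> simp_all [Matrix.vecHead, Matrix.vecTail]
    · ext i j; fin_cases i <;> fin_cases j <;>
        simp [Matrix.mul_apply, Fin.sum_univ_three, Matrix.vecHead, Matrix.vecTail]
  · rintro ⟨a1, b1⟩ ⟨a2, b2⟩ ⟨a3, b3⟩ h
    have h12 := congrFun (congrFun h 0) 1
    have h32 := congrFun (congrFun h 2) 1
    have h23 := congrFun (congrFun h 1) 2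
    have h33 := congrFun (congrFun h 2) 2
    simp [F3, iMat, Emat, Matrix.mul_apply, Fin.sum_univ_three, Matrix.one_apply,
      Matrix.add_apply, Matrix.smul_apply, Matrix.of_apply, Matrix.vecHead, Matrix.vecTail] at h12 h32 h23 h33
    -- h12 : b1 = 0, h32 : a3 + ... = 1, h23 : b3 + a2*b2*b3 = 1, h33 : ... = 1
    have ha3 : a3 = 1 := by linear_combination h32 - (a2 + a2*a3*b3 + a1*a3) * h12
    rw [ha3] at h33
    have hx : a2 * b2 = -1 := by linear_combination h33 - h23
    have h0 : (0:ℂ) = 1 := by linear_combination h23 - b3 * hx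
    exact zero_ne_one h0
  · rintro ⟨a1, b1⟩ ⟨a2, b2⟩ ⟨a3, b3⟩ h
    have k31 := congrFun (congrFun h 2) 0
    have k12 := congrFun (congrFun h 0) 1
    have k13 := congrFun (congrFun h 0) 2
    have k32 := congrFun (congrFun h 2) 1
    simp [F3', iMat, Emat, Matrix.mul_apply, Fin.sum_univ_three, Matrix.one_apply,
      Matrix.add_apply, Matrix.smul_apply, Matrix.of_apply, Matrix.vecHead, Matrix.vecTail] at k31 k12 k13 k32
    have hb2 : b2 = 1 := by linear_combination k13 - b1 * k12
    have h0 : (0:ℂ) = 1 := by linear_combination k32 - a1*b2*k31 + a1*hb2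
    exact zero_ne_one h0
end
end
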